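/- arXiv:2507.10907 — 5 statements merged into one kernel-verified Lean document; each statement's English description precedes it below -/
import Mathlib

section
/- Let G be a topological gyrogroup, U an open neighborhood of the identity 0, and F a compact subset of G. Then there exists an open neighborhood V of 0 such that (a ⊕ V) ⊕ (b ⊕ V) ⊆ (a ⊕ b) ⊕ U for all a, b ∈ F. -/
universe u

class Gyrogroup (G : Type u) where
  add : G → G → G
  zero : G
  neg : G → G
  gyr : G → G → G → G
  zero_add : ∀ x, add zero x = x
  add_zero : ∀ x, add x zero = x
  neg_add : ∀ x, add (neg x) x = zero
  add_neg : ∀ x, add x (neg x) = zero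
  gyr_bij : ∀ x y, Function.Bijective (gyr x y)
  gyr_add : ∀ x y a b, gyr x y (add a b) = add (gyr x y a) (gyr x y b)
  left_assoc : ∀ x y z, add x (add y z) = add (add x y) (gyr x y z)
  loop : ∀ x y, gyr (add x y) y = gyr x y

namespace Gyrogroup

variable {G : Type u}

instance [Gyrogroup G] : Add G := ⟨Gyrogroup.add⟩
instance [Gyrogroup G] : Zero G := ⟨Gyrogroup.zero⟩
instance [Gyrogroup G] : Neg G := ⟨Gyrogroup.neg⟩

/-- The gyrogroup cooperation `x ⊞ y = x ⊕ gyr[x, ⊖y](y)`. -/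
def coadd [Gyrogroup G] (x y : G) : G := x + gyr x (-y) y

/-- `S` is a subgyrogroup: contains the identity and is closed under `⊕`, `⊖` and the
gyroautomorphisms. -/
def IsSubgyro [Gyrogroup G] (S : Set G) : Prop :=
  (0 : G) ∈ S ∧ (∀ ⦃a b : G⦄, a ∈ S → b ∈ S → a + b ∈ S) ∧
    (∀ ⦃a : G⦄, a ∈ S → -a ∈ S) ∧
    ∀ ⦃a b c : G⦄, a ∈ S → b ∈ S → c ∈ S → gyr a b c ∈ S

/-- The subgyrogroup generated by `A`. -/
def gen [Gyrogroup G] (A : Set G) : Set G := ⋂₀ {S : Set G | IsSubgyro S ∧ A ⊆ S}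

/-- `N` is a normal subgyrogroup: the kernel of a gyrogroup homomorphism. -/
def IsNormalSubgyro [Gyrogroup G] (N : Set G) : Prop :=
  ∃ (H : Type u) (i : Gyrogroup H) (f : G → H),
    (∀ a b : G, f (a + b) = i.add (f a) (f b)) ∧ N = f ⁻¹' {i.zero}

/-- A (Hausdorff) topological gyrogroup. -/
class TopGyrogroup (G : Type u) [Gyrogroup G] [TopologicalSpace G] : Prop where
  t2 : T2Space G
  continuous_add : Continuous fun p : G × G => p.1 + p.2
  continuous_neg : Continuous fun x : G => -x

/-- `μ` is a neighborhood base at `0` consisting of gyr-invariant sets. -/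
def IsGyroNhdBase [Gyrogroup G] [TopologicalSpace G] (μ : Set (Set G)) : Prop :=
  (∀ U ∈ μ, U ∈ nhds (0 : G)) ∧ (∀ W ∈ nhds (0 : G), ∃ U ∈ μ, U ⊆ W) ∧
    ∀ U ∈ μ, ∀ x y : G, gyr x y '' U = U

/-- A strongly topological gyrogroup: some neighborhood base at `0` is gyr-invariant. -/
def StronglyTop (G : Type u) [Gyrogroup G] [TopologicalSpace G] : Prop :=
  ∃ μ : Set (Set G), IsGyroNhdBase μ

/-- `S` is a suitable set for `G`. -/
def IsSuitable [Gyrogroup G] [TopologicalSpace G] (S : Set G) : Prop :=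
  DiscreteTopology S ∧ IsClosed (S ∪ {(0 : G)}) ∧ Dense (gen S)

end Gyrogroup

open Gyrogroup

section Aux

variable {G : Type u} [Gyrogroup G]

lemma gyro_add_def (a b : G) : a + b = Gyrogroup.add a b := rfl
lemma gyro_zero_def : (0 : G) = Gyrogroup.zero := rfl
lemma gyro_neg_def (a : G) : -a = Gyrogroup.neg a := rfl

lemma gyro_left_cancel {a x y : G} (h : a + x = a + y) : x = y := by
  have h' : -a + (a + x) = -a + (a + y) := by rw [h]
  have e : ∀ z : G, -a + (a + z) = gyr (-a) a z := fun z => by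
    simp only [gyro_add_def, gyro_neg_def]
    rw [Gyrogroup.left_assoc, Gyrogroup.neg_add, Gyrogroup.zero_add]
  rw [e x, e y] at h'
  exact (Gyrogroup.gyr_bij (-a) a).1 h'

lemma gyro_gyr_zero (y z : G) : gyr (0 : G) y z = z := by
  have h := Gyrogroup.left_assoc (0 : G) y z
  rw [gyro_zero_def, Gyrogroup.zero_add, Gyrogroup.zero_add] at h
  have h' : y + z = y + gyr Gyrogroup.zero y z := h
  rw [← gyro_zero_def] at h'
  exact (gyro_left_cancel (a := y) h').symm

lemma gyro_neg_add_cancel_left (a z : G) : -a + (a + z) = z := by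
  simp only [gyro_add_def, gyro_neg_def]
  rw [Gyrogroup.left_assoc, Gyrogroup.neg_add, Gyrogroup.zero_add]
  have hl := Gyrogroup.loop (Gyrogroup.neg a) a
  rw [Gyrogroup.neg_add] at hl
  rw [← hl]
  exact gyro_gyr_zero a z

lemma gyro_neg_neg (a : G) : -(-a) = a := by
  have h := gyro_neg_add_cancel_left (-a) a
  rw [show ((-a : G) + a) = 0 from Gyrogroup.neg_add a] at h
  rw [show ((- -a : G) + 0) = - -a from Gyrogroup.add_zero _] at h
  exact h

lemma gyro_add_neg_cancel_left (a z : G) : a + (-a + z) = z := by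
  have h := gyro_neg_add_cancel_left (-a) z
  rwa [gyro_neg_neg] at h

lemma gyro_mem_image_add {c z : G} {U : Set G} (h : -c + z ∈ U) :
    z ∈ (c + ·) '' U :=
  ⟨-c + z, h, gyro_add_neg_cancel_left c z⟩

end Aux

section AuxTop

variable {G : Type u} [Gyrogroup G] [TopologicalSpace G] [TopGyrogroup G]

lemma gyro_cont_add {α : Type*} [TopologicalSpace α] {f g : α → G}
    (hf : Continuous f) (hg : Continuous g) : Continuous fun x => f x + g x :=
  TopGyrogroup.continuous_add.comp (hf.prodMk hg)

lemma gyro_cont_neg {α : Type*} [TopologicalSpace α] {f : α → G}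
    (hf : Continuous f) : Continuous fun x => -f x :=
  TopGyrogroup.continuous_neg.comp hf

end AuxTop

theorem exists_nhd_of_compact_add {G : Type u} [Gyrogroup G] [TopologicalSpace G]
    [TopGyrogroup G] (U : Set G) (hU : IsOpen U) (hU0 : (0 : G) ∈ U)
    (F : Set G) (hF : IsCompact F) :
    ∃ V : Set G, IsOpen V ∧ (0 : G) ∈ V ∧ ∀ a ∈ F, ∀ b ∈ F,
      Set.image2 (· + ·) ((a + ·) '' V) ((b + ·) '' V) ⊆ ((a + b) + ·) '' U := by
  classical
  set f : (G × G) × (G × G) → G :=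
    fun q => -(q.1.1 + q.1.2) + ((q.1.1 + q.2.1) + (q.1.2 + q.2.2)) with hf
  have hfc : Continuous f := by
    apply gyro_cont_add
    · exact gyro_cont_neg (gyro_cont_add (continuous_fst.comp continuous_fst)
        (continuous_snd.comp continuous_fst))
    · exact gyro_cont_add
        (gyro_cont_add (continuous_fst.comp continuous_fst)
          (continuous_fst.comp continuous_snd))
        (gyro_cont_add (continuous_snd.comp continuous_fst)
          (continuous_snd.comp continuous_snd))
  have hW : IsOpen (f ⁻¹' U) := hU.preimage hfc
  set K : Set (G × G) := F ×ˢ F with hK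
  have hKc : IsCompact K := hF.prod hF
  have key : ∀ p : G × G, p ∈ K → ∃ A : Set (G × G), ∃ V : Set G,
      IsOpen A ∧ p ∈ A ∧ IsOpen V ∧ (0 : G) ∈ V ∧
      ∀ q ∈ A, ∀ x ∈ V, ∀ y ∈ V, f (q, (x, y)) ∈ U := by
    intro p _
    have hp0 : (p, ((0 : G), (0 : G))) ∈ f ⁻¹' U := by
      show f (p, (0, 0)) ∈ U
      simp only [hf]
      rw [show p.1 + (0 : G) = p.1 from Gyrogroup.add_zero p.1,
        show p.2 + (0 : G) = p.2 from Gyrogroup.add_zero p.2,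
        show (-(p.1 + p.2) + (p.1 + p.2) : G) = 0 from Gyrogroup.neg_add _]
      exact hU0
    rcases isOpen_prod_iff.1 hW p ((0 : G), (0 : G)) hp0 with
      ⟨A, B, hA, hB, hpA, h0B, hAB⟩
    rcases isOpen_prod_iff.1 hB (0 : G) (0 : G) h0B with
      ⟨V₁, V₂, hV₁, hV₂, h01, h02, hVB⟩
    refine ⟨A, V₁ ∩ V₂, hA, hpA, hV₁.inter hV₂, ⟨h01, h02⟩, ?_⟩
    intro q hq x hx y hy
    exact hAB (Set.mk_mem_prod hq (hVB (Set.mk_mem_prod hx.1 hy.2)))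
  choose A V hAo hpA hVo h0V hsub using key
  rcases hKc.elim_nhds_subcover' (fun p hp => A p hp)
      (fun p hp => (hAo p hp).mem_nhds (hpA p hp)) with ⟨t, ht⟩
  refine ⟨⋂ p ∈ t, V p p.2, isOpen_biInter_finset (fun p _ => hVo p p.2), ?_, ?_⟩
  · exact Set.mem_biInter fun p _ => h0V p p.2
  · intro a ha b hb z hz
    rcases hz with ⟨u, ⟨x, hx, rfl⟩, v, ⟨y, hy, rfl⟩, rfl⟩
    have hpK : ((a, b) : G × G) ∈ K := Set.mk_mem_prod ha hb
    rcases Set.mem_iUnion₂.1 (ht hpK) with ⟨p, hp, hmem⟩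
    have hxV : x ∈ V p p.2 := Set.mem_iInter₂.1 hx p hp
    have hyV : y ∈ V p p.2 := Set.mem_iInter₂.1 hy p hp
    have := hsub p p.2 (a, b) hmem x hxV y hyV
    exact gyro_mem_image_add this
end

section
/- Let G be a strongly topological gyrogroup with a symmetric neighborhood base μ at 0, and suppose U, W ∈ μ satisfy W ⊆ U and W ⊕ W ⊆ U. If H is a compact subset of G, then there exists V ∈ μ such that (⊖h) ⊕ (V ⊕ h) ⊆ U for every h ∈ H. -/
universe u

open Gyrogroup
theorem exists_basic_nhd_conj {G : Type u} [Gyrogroup G] [TopologicalSpace G]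
    [TopGyrogroup G] (μ : Set (Set G)) (hμ : IsGyroNhdBase μ)
    (hsym : ∀ U ∈ μ, (fun x : G => -x) '' U = U)
    (U W : Set G) (hU : U ∈ μ) (hW : W ∈ μ) (hWU : W ⊆ U)
    (hWW : Set.image2 (· + ·) W W ⊆ U)
    (H : Set G) (hH : IsCompact H) :
    ∃ V ∈ μ, ∀ h ∈ H, ∀ v ∈ V, (-h) + (v + h) ∈ U :=
  by
  have hadd : Continuous fun p : G × G => p.1 + p.2 := TopGyrogroup.continuous_add
  have hneg : Continuous fun x : G => -x := TopGyrogroup.continuous_neg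
  have hf : Continuous fun p : G × G => (-p.1) + (p.2 + p.1) :=
    hadd.comp ((hneg.comp continuous_fst).prodMk
      (hadd.comp (continuous_snd.prodMk continuous_fst)))
  have hUnhd : U ∈ nhds (0 : G) := hμ.1 U hU
  have hSopen : IsOpen ((fun p : G × G => (-p.1) + (p.2 + p.1)) ⁻¹' interior U) :=
    hf.isOpen_preimage _ isOpen_interior
  have key : ∀ h : G, ∃ O ∈ nhds h, ∃ V ∈ μ, ∀ x ∈ O, ∀ v ∈ V, (-x) + (v + x) ∈ U := by
    intro h
    have h0 : (h, (0 : G)) ∈ (fun p : G × G => (-p.1) + (p.2 + p.1)) ⁻¹' interior U := by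
      have : (-h) + ((0 : G) + h) = (0 : G) := by
        show Gyrogroup.add (Gyrogroup.neg h) (Gyrogroup.add Gyrogroup.zero h) = Gyrogroup.zero
        rw [Gyrogroup.zero_add, Gyrogroup.neg_add]
      simp only [Set.mem_preimage, this]
      exact mem_interior_iff_mem_nhds.2 hUnhd
    have hS : (fun p : G × G => (-p.1) + (p.2 + p.1)) ⁻¹' interior U ∈ nhds (h, (0 : G)) :=
      hSopen.mem_nhds h0
    rw [mem_nhds_prod_iff] at hS
    obtain ⟨O, hO, V', hV', hsub⟩ := hS
    obtain ⟨V, hVμ, hVV'⟩ := hμ.2.1 V' hV'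
    refine ⟨O, hO, V, hVμ, fun x hx v hv => ?_⟩
    have hmem : ((x, v) : G × G) ∈ O ×ˢ V' := ⟨hx, hVV' hv⟩
    exact interior_subset (hsub hmem)
  choose O hO V hV hgood using key
  obtain ⟨t, -, hcover⟩ := hH.elim_nhds_subcover O fun x _ => hO x
  have hinter : (⋂ x ∈ t, V x) ∈ nhds (0 : G) :=
    (Filter.biInter_finset_mem t).2 fun x _ => hμ.1 _ (hV x)
  obtain ⟨V0, hV0μ, hV0⟩ := hμ.2.1 _ hinter
  refine ⟨V0, hV0μ, fun h hh v hv => ?_⟩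
  obtain ⟨x, hxt, hhx⟩ := Set.mem_iUnion₂.1 (hcover hh)
  exact hgood x h hhx v (Set.mem_iInter₂.1 (hV0 hv) x hxt)
end

section
/- Let G be a σ-compact, locally compact strongly topological gyrogroup and {Uₙ : n ∈ ω} a countable family of neighborhoods of 0. Then there is a sequence {Vₙ : n ∈ ω} of symmetric open neighborhoods of 0 with compact closure of V₀, V_{n+1} ⊕ V_{n+1} ⊆ Vₙ ∩ Uₙ, and gyr[x,y](Vₙ) = Vₙ for all x, y ∈ G, such that N = ⋂ₙ Vₙ is a compact normal subgyrogroup of G satisfying x ⊕ N = N ⊕ x for every x ∈ G. -/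
universe u

namespace Gyrogroup

variable {G : Type u} [Gyrogroup G]

theorem zero_add' (x : G) : (0 : G) + x = x := Gyrogroup.zero_add x
theorem add_zero' (x : G) : x + (0 : G) = x := Gyrogroup.add_zero x
theorem neg_add' (x : G) : -x + x = (0 : G) := Gyrogroup.neg_add x
theorem add_neg' (x : G) : x + -x = (0 : G) := Gyrogroup.add_neg x
theorem left_assoc' (x y z : G) : x + (y + z) = (x + y) + gyr x y z :=
  Gyrogroup.left_assoc x y z
theorem gyr_add' (x y a b : G) : gyr x y (a + b) = gyr x y a + gyr x y b :=
  Gyrogroup.gyr_add x y a b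
theorem loop' (x y : G) : gyr (x + y) y = gyr x y := Gyrogroup.loop x y

theorem gyr_inj {x y : G} : Function.Injective (gyr x y) := (Gyrogroup.gyr_bij x y).1
theorem gyr_surj {x y : G} : Function.Surjective (gyr x y) := (Gyrogroup.gyr_bij x y).2

theorem add_left_cancel' {a b c : G} (h : a + b = a + c) : b = c := by
  have h2 : (-a + a) + gyr (-a) a b = (-a + a) + gyr (-a) a c := by
    rw [← left_assoc', ← left_assoc', h]
  rw [neg_add', zero_add', zero_add'] at h2
  exact gyr_inj h2

theorem gyr_zero (x y : G) : gyr x y 0 = 0 := by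
  have h : gyr x y 0 + gyr x y 0 = gyr x y 0 + 0 := by
    rw [← gyr_add', zero_add', add_zero']
  exact add_left_cancel' h

theorem gyr_neg (x y a : G) : gyr x y (-a) = -(gyr x y a) := by
  have h : gyr x y a + gyr x y (-a) = gyr x y a + -(gyr x y a) := by
    rw [← gyr_add', add_neg', gyr_zero, add_neg']
  exact add_left_cancel' h

theorem neg_neg' (a : G) : -(-a) = a := by
  have h : -a + -(-a) = -a + a := by rw [add_neg', neg_add']
  exact add_left_cancel' h

theorem gyr_zero_left (y z : G) : gyr 0 y z = z := by
  have h : y + z = y + gyr 0 y z := by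
    have := left_assoc' (0 : G) y z
    rwa [zero_add', zero_add'] at this
  exact (add_left_cancel' h).symm

theorem gyr_neg_self (a : G) : gyr (-a) a = gyr 0 a := by
  have := loop' (-a) a; rw [neg_add'] at this; exact this.symm

theorem gyr_self_neg (a : G) : gyr a (-a) = gyr 0 (-a) := by
  have := loop' a (-a); rw [add_neg'] at this; exact this.symm

theorem neg_add_cancel_left (a b : G) : -a + (a + b) = b := by
  rw [left_assoc', neg_add', zero_add', gyr_neg_self, gyr_zero_left]

theorem add_neg_cancel_left (a b : G) : a + (-a + b) = b := by
  have := neg_add_cancel_left (-a) b; rwa [neg_neg'] at this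

theorem add_gyr_neg (a b : G) : (a + b) + gyr a b (-b) = a := by
  rw [← left_assoc', add_neg', add_zero']

theorem eq_neg_of_add_eq_zero {a b : G} (h : a + b = 0) : b = -a := by
  have : a + b = a + -a := by rw [h, add_neg']
  exact add_left_cancel' this

theorem neg_add_eq (a b : G) : -(a + b) = gyr a b (-b + -a) := by
  symm
  apply eq_neg_of_add_eq_zero
  rw [← left_assoc', add_neg_cancel_left, add_neg']

theorem gyrator (a b z : G) : gyr a b z = -(a + b) + (a + (b + z)) := by
  conv_rhs => rw [left_assoc' a b z]
  rw [neg_add_cancel_left]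

theorem add_right_cancel' {a b c : G} (h : a + b = c + b) : a = c := by
  have ha : a = (a + b) + gyr (a + b) b (-b) := by rw [loop', add_gyr_neg]
  have hc : c = (c + b) + gyr (c + b) b (-b) := by rw [loop', add_gyr_neg]
  rw [ha, hc, h]

/-- Palindrome identity: `p ⊕ (a ⊕ (p ⊕ z)) = ⊖(⊖p ⊕ (⊖a ⊕ ⊖p)) ⊕ z`. -/
theorem palindrome (p a z : G) :
    p + (a + (p + z)) = -(-p + (-a + -p)) + z := by
  set b : G := -a + -p with hb
  have hab : a + b = -p := by rw [hb, add_neg_cancel_left]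
  have key : ∀ w : G, a + (b + w) = -p + (-(-p + b) + (-p + (b + w))) := by
    intro w
    calc a + (b + w) = (a + b) + gyr (a + b) b w := by rw [left_assoc', loop']
    _ = -p + gyr (-p) b w := by rw [hab]
    _ = -p + (-(-p + b) + (-p + (b + w))) := by rw [gyrator]
  have key2 : ∀ w : G, p + (a + (b + w)) = -(-p + b) + (-p + (b + w)) := by
    intro w; rw [key w, add_neg_cancel_left]
  have := key2 (-b + (p + z))
  rw [add_neg_cancel_left] at this; rwa [neg_add_cancel_left] at this

/-- Right division: the solution `x` of `x ⊕ y = c`. -/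
def rdiv (c y : G) : G := -(y + (-(y + c) + y))

theorem rdiv_add (c y : G) : rdiv c y + y = c := by
  have h := palindrome (-y) (y + c) (-(-y))
  rw [add_neg', add_zero', neg_neg'] at h
  rw [neg_add_cancel_left] at h
  exact h.symm

theorem rdiv_self (y : G) : rdiv y y = 0 := by
  apply add_right_cancel' (b := y)
  rw [rdiv_add, zero_add']

theorem rdiv_eq {x y c : G} (h : x + y = c) : x = rdiv c y := by
  apply add_right_cancel' (b := y)
  rw [rdiv_add, h]

end Gyrogroup
namespace Gyrogroup

variable {G : Type u} [Gyrogroup G]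

theorem isNormalSubgyro_mk {N : Set G}
    (h0 : (0 : G) ∈ N)
    (hadd : ∀ a ∈ N, ∀ b ∈ N, a + b ∈ N)
    (hneg : ∀ a ∈ N, -a ∈ N)
    (hgyr : ∀ x y : G, gyr x y '' N = N)
    (hB : ∀ x y m : G, m ∈ N → -(x + y) + ((x + m) + y) ∈ N)
    (hnegc : ∀ x m : G, m ∈ N → x + -(x + m) ∈ N) :
    IsNormalSubgyro N := by
  have gyr_mem : ∀ p q : G, ∀ {a : G}, a ∈ N → gyr p q a ∈ N := by
    intro p q a ha
    have := Set.mem_image_of_mem (gyr p q) ha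
    rwa [hgyr] at this
  have gyr_mem_rev : ∀ p q : G, ∀ {a : G}, gyr p q a ∈ N → a ∈ N := by
    intro p q a ha
    rw [← hgyr p q] at ha
    obtain ⟨w, hw, he⟩ := ha
    exact (gyr_inj he) ▸ hw
  set r : G → G → Prop := fun x y => -x + y ∈ N with hrdef
  have hrfl : ∀ x : G, r x x := by intro x; show -x + x ∈ N; rw [neg_add']; exact h0
  have hsymm : ∀ {x y : G}, r x y → r y x := by
    intro x y h
    show -y + x ∈ N
    apply gyr_mem_rev (-x) y
    have he : gyr (-x) y (-y + x) = -(-x + y) := by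
      rw [neg_add_eq (-x) y, neg_neg']
    rw [he]
    exact hneg _ h
  have htrans : ∀ {x y z : G}, r x y → r y z → r x z := by
    intro x y z hxy hyz
    show -x + z ∈ N
    have he : -x + z = (-x + y) + gyr (-x) y (-y + z) := by
      rw [← left_assoc', add_neg_cancel_left]
    rw [he]
    exact hadd _ hxy _ (gyr_mem _ _ hyz)
  have hr_add : ∀ {x x' y y' : G}, r x x' → r y y' → r (x + y) (x' + y') := by
    intro x x' y y' hx hy
    show -(x + y) + (x' + y') ∈ N
    have hn' : y + (-y + y') = y' := add_neg_cancel_left y y'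
    have e1 : x' + y' = (x' + y) + gyr x' y (-y + y') := by
      conv_lhs => rw [← hn']
      exact left_assoc' x' y (-y + y')
    have ht : -(x + y) + (x' + y) ∈ N := by
      have := hB x y (-x + x') hx
      rwa [add_neg_cancel_left] at this
    have e2 : x' + y = (x + y) + (-(x + y) + (x' + y)) :=
      (add_neg_cancel_left (x + y) (x' + y)).symm
    have n2el : gyr x' y (-y + y') ∈ gyr (x + y) (-(x + y) + (x' + y)) '' N := by
      rw [hgyr]; exact gyr_mem _ _ hy
    obtain ⟨w, hwN, hw⟩ := n2el
    have key : -(x + y) + (x' + y') = (-(x + y) + (x' + y)) + w := by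
      calc -(x + y) + (x' + y') = -(x + y) + ((x' + y) + gyr x' y (-y + y')) := by rw [e1]
      _ = -(x + y) + (((x + y) + (-(x + y) + (x' + y))) + gyr x' y (-y + y')) := by
            conv_lhs => rw [e2]
      _ = -(x + y) + (((x + y) + (-(x + y) + (x' + y)))
            + gyr (x + y) (-(x + y) + (x' + y)) w) := by rw [hw]
      _ = -(x + y) + ((x + y) + ((-(x + y) + (x' + y)) + w)) := by rw [← left_assoc']
      _ = (-(x + y) + (x' + y)) + w := by rw [neg_add_cancel_left]
    rw [key]
    exact hadd _ ht _ hwN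
  have hr_neg : ∀ {x x' : G}, r x x' → r (-x) (-x') := by
    intro x x' hx
    show -(-x) + -x' ∈ N
    have hxm : x + (-x + x') = x' := add_neg_cancel_left x x'
    rw [neg_neg', ← hxm]
    exact hnegc x _ hx
  have hr_gyr : ∀ {x x' y y' z z' : G}, r x x' → r y y' → r z z' →
      r (gyr x y z) (gyr x' y' z') := by
    intro x x' y y' z z' hx hy hz
    rw [hrdef]
    show -(gyr x y z) + gyr x' y' z' ∈ N
    rw [gyrator x y z, gyrator x' y' z']
    exact hr_add (hr_neg (hr_add hx hy)) (hr_add hx (hr_add hy hz))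
  let s : Setoid G := ⟨r, ⟨hrfl, hsymm, htrans⟩⟩
  have hsound : ∀ {u v : G}, r u v → Quotient.mk s u = Quotient.mk s v :=
    fun h => Quotient.sound h
  have hexact : ∀ {u v : G}, Quotient.mk s u = Quotient.mk s v → r u v :=
    fun h => Quotient.exact h
  have hout : ∀ a : Quotient s, Quotient.mk s (Quotient.out a) = a :=
    fun a => Quotient.out_eq a
  have ro : ∀ x : G, r (Quotient.out (Quotient.mk s x)) x :=
    fun x => hexact (hout _)
  refine ⟨Quotient s,
    { add := fun a b => Quotient.mk s (Quotient.out a + Quotient.out b)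
      zero := Quotient.mk s 0
      neg := fun a => Quotient.mk s (-(Quotient.out a))
      gyr := fun a b c =>
        Quotient.mk s (gyr (Quotient.out a) (Quotient.out b) (Quotient.out c))
      zero_add := ?_, add_zero := ?_, neg_add := ?_, add_neg := ?_
      gyr_bij := ?_, gyr_add := ?_, left_assoc := ?_, loop := ?_ },
    fun x => Quotient.mk s x, ?_, ?_⟩
  · -- zero_add
    intro a
    have h1 : r (Quotient.out (Quotient.mk s (0 : G)) + Quotient.out a)
        ((0 : G) + Quotient.out a) := hr_add (ro 0) (hrfl _)
    rw [zero_add'] at h1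
    exact (hsound h1).trans (hout a)
  · intro a
    have h1 : r (Quotient.out a + Quotient.out (Quotient.mk s (0 : G)))
        (Quotient.out a + (0 : G)) := hr_add (hrfl _) (ro 0)
    rw [add_zero'] at h1
    exact (hsound h1).trans (hout a)
  · intro a
    have h1 : r (Quotient.out (Quotient.mk s (-(Quotient.out a))) + Quotient.out a)
        (-(Quotient.out a) + Quotient.out a) := hr_add (ro _) (hrfl _)
    rw [neg_add'] at h1
    exact hsound h1
  · intro a
    have h1 : r (Quotient.out a + Quotient.out (Quotient.mk s (-(Quotient.out a))))
        (Quotient.out a + -(Quotient.out a)) := hr_add (hrfl _) (ro _)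
    rw [add_neg'] at h1
    exact hsound h1
  · -- gyr_bij
    intro a b
    constructor
    · intro c d h
      have h1 := hexact h
      have h2 : gyr (Quotient.out a) (Quotient.out b)
          (-(Quotient.out c) + Quotient.out d) ∈ N := by
        rw [gyr_add', gyr_neg]; exact h1
      have h3 : r (Quotient.out c) (Quotient.out d) := gyr_mem_rev _ _ h2
      calc c = Quotient.mk s (Quotient.out c) := (hout c).symm
      _ = Quotient.mk s (Quotient.out d) := hsound h3
      _ = d := hout d
    · intro b'
      obtain ⟨w, hw⟩ := gyr_surj (x := Quotient.out a) (y := Quotient.out b)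
        (Quotient.out b')
      refine ⟨Quotient.mk s w, ?_⟩
      have h1 : r (gyr (Quotient.out a) (Quotient.out b)
          (Quotient.out (Quotient.mk s w)))
          (gyr (Quotient.out a) (Quotient.out b) w) :=
        hr_gyr (hrfl _) (hrfl _) (ro w)
      rw [hw] at h1
      exact (hsound h1).trans (hout b')
  · -- gyr_add
    intro x y a b
    have h1 : r (gyr (Quotient.out x) (Quotient.out y)
        (Quotient.out (Quotient.mk s (Quotient.out a + Quotient.out b))))
        (gyr (Quotient.out x) (Quotient.out y) (Quotient.out a + Quotient.out b)) :=
      hr_gyr (hrfl _) (hrfl _) (ro _)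
    rw [gyr_add'] at h1
    have h2 : r (gyr (Quotient.out x) (Quotient.out y) (Quotient.out a)
        + gyr (Quotient.out x) (Quotient.out y) (Quotient.out b))
        (Quotient.out (Quotient.mk s (gyr (Quotient.out x) (Quotient.out y) (Quotient.out a)))
        + Quotient.out (Quotient.mk s (gyr (Quotient.out x) (Quotient.out y) (Quotient.out b)))) :=
      hr_add (hsymm (ro _)) (hsymm (ro _))
    exact hsound (htrans h1 h2)
  · -- left_assoc
    intro x y z
    have h1 : r (Quotient.out x + Quotient.out (Quotient.mk s (Quotient.out y + Quotient.out z)))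
        (Quotient.out x + (Quotient.out y + Quotient.out z)) := hr_add (hrfl _) (ro _)
    rw [left_assoc'] at h1
    have h2 : r ((Quotient.out x + Quotient.out y)
          + gyr (Quotient.out x) (Quotient.out y) (Quotient.out z))
        (Quotient.out (Quotient.mk s (Quotient.out x + Quotient.out y))
          + Quotient.out (Quotient.mk s (gyr (Quotient.out x) (Quotient.out y) (Quotient.out z)))) :=
      hr_add (hsymm (ro _)) (hsymm (ro _))
    exact hsound (htrans h1 h2)
  · -- loop
    intro x y
    funext z
    have h1 : r (gyr (Quotient.out (Quotient.mk s (Quotient.out x + Quotient.out y)))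
        (Quotient.out y) (Quotient.out z))
        (gyr (Quotient.out x + Quotient.out y) (Quotient.out y) (Quotient.out z)) :=
      hr_gyr (ro _) (hrfl _) (hrfl _)
    rw [loop'] at h1
    exact hsound h1
  · -- homomorphism
    intro a b
    exact hsound (hr_add (hsymm (ro a)) (hsymm (ro b)))
  · -- kernel
    ext x
    simp only [Set.mem_preimage, Set.mem_singleton_iff]
    constructor
    · intro hx
      apply hsound
      show -x + 0 ∈ N
      rw [add_zero']
      exact hneg _ hx
    · intro hx
      have h1 : -x + 0 ∈ N := hexact hx
      rw [add_zero'] at h1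
      have := hneg _ h1
      rwa [neg_neg'] at this

end Gyrogroup
namespace Gyrogroup

section Top

variable {G : Type u} [Gyrogroup G] [TopologicalSpace G] [TopGyrogroup G]

theorem cont_add {X : Type v} [TopologicalSpace X] {f g : X → G} (hf : Continuous f)
    (hg : Continuous g) : Continuous fun x => f x + g x :=
  TopGyrogroup.continuous_add.comp (hf.prodMk hg)

theorem cont_neg {X : Type v} [TopologicalSpace X] {f : X → G} (hf : Continuous f) :
    Continuous fun x => -(f x) :=
  TopGyrogroup.continuous_neg.comp hf

/-- Left translation as a homeomorphism. -/
def addLeftHomeo (a : G) : G ≃ₜ G where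
  toFun := fun z => a + z
  invFun := fun z => -a + z
  left_inv := fun z => neg_add_cancel_left a z
  right_inv := fun z => add_neg_cancel_left a z
  continuous_toFun := cont_add continuous_const continuous_id
  continuous_invFun := cont_add continuous_const continuous_id

/-- Negation as a homeomorphism. -/
def negHomeo : G ≃ₜ G where
  toFun := fun z : G => -z
  invFun := fun z : G => -z
  left_inv := fun z => neg_neg' z
  right_inv := fun z => neg_neg' z
  continuous_toFun := cont_neg continuous_id
  continuous_invFun := cont_neg continuous_id

theorem cont_gyr (x y : G) : Continuous (gyr x y) := by
  have h : (gyr x y : G → G) = fun z => -(x + y) + (x + (y + z)) := funext (gyrator x y)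
  rw [h]
  exact cont_add continuous_const (cont_add continuous_const
    (cont_add continuous_const continuous_id))

/-- A gyration as a homeomorphism. -/
def gyrHomeo (x y : G) : G ≃ₜ G where
  toFun := gyr x y
  invFun := fun z => -y + (-x + ((x + y) + z))
  left_inv := by
    intro z
    show -y + (-x + ((x + y) + gyr x y z)) = z
    rw [← left_assoc', neg_add_cancel_left, neg_add_cancel_left]
  right_inv := by
    intro z
    show gyr x y (-y + (-x + ((x + y) + z))) = z
    rw [gyrator, add_neg_cancel_left, add_neg_cancel_left, neg_add_cancel_left]
  continuous_toFun := cont_gyr x y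
  continuous_invFun := cont_add continuous_const (cont_add continuous_const
    (cont_add continuous_const continuous_id))

theorem gyr_image_interior (x y : G) (S : Set G) :
    gyr x y '' interior S = interior (gyr x y '' S) :=
  (gyrHomeo x y).image_interior S

theorem neg_image_involutive (A : Set G) : (fun z : G => -z) '' ((fun z : G => -z) '' A) = A := by
  rw [Set.image_image]
  simp only [neg_neg', Set.image_id']

theorem neg_injective : Function.Injective (fun z : G => -z) :=
  Function.LeftInverse.injective (g := fun z : G => -z) neg_neg'

/-- From a gyration-invariant neighborhood base we can extract open symmetric
gyration-invariant neighborhoods inside any given neighborhood of `0`. -/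
theorem exists_good_sub {μ : Set (Set G)} (hμ : IsGyroNhdBase μ) {W : Set G}
    (hW : W ∈ nhds (0 : G)) :
    ∃ V : Set G, IsOpen V ∧ (0 : G) ∈ V ∧ (fun x : G => -x) '' V = V ∧
      (∀ x y : G, gyr x y '' V = V) ∧ V ⊆ W := by
  obtain ⟨U', hU'μ, hU'W⟩ := hμ.2.1 W hW
  have hU'n : U' ∈ nhds (0 : G) := hμ.1 U' hU'μ
  have hgyrU : ∀ x y : G, gyr x y '' U' = U' := hμ.2.2 U' hU'μ
  set V : Set G := interior U' ∩ (fun z : G => -z) '' interior U' with hV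
  have hVopen : IsOpen V :=
    isOpen_interior.inter ((negHomeo (G := G)).isOpen_image.mpr isOpen_interior)
  have h0i : (0 : G) ∈ interior U' := mem_interior_iff_mem_nhds.mpr hU'n
  have hneg0 : -(0 : G) = 0 := by
    have h := eq_neg_of_add_eq_zero (zero_add' (0 : G))
    exact h.symm
  have h0V : (0 : G) ∈ V := by
    refine ⟨h0i, ⟨0, h0i, hneg0⟩⟩
  have hsymm : (fun x : G => -x) '' V = V := by
    rw [hV, Set.image_inter neg_injective, neg_image_involutive]
    exact Set.inter_comm _ _
  have hgyrV : ∀ x y : G, gyr x y '' V = V := by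
    intro x y
    have h1 : gyr x y '' interior U' = interior U' := by
      rw [gyr_image_interior, hgyrU]
    have h2 : gyr x y '' ((fun z : G => -z) '' interior U')
        = (fun z : G => -z) '' interior U' := by
      rw [Set.image_image]
      have he : (fun a : G => gyr x y (-a)) = fun a : G => -(gyr x y a) :=
        funext fun a => gyr_neg x y a
      rw [he, ← Set.image_image, h1]
    rw [hV, Set.image_inter gyr_inj, h1, h2]
  exact ⟨V, hVopen, h0V, hsymm, hgyrV,
    fun z hz => hU'W (interior_subset hz.1)⟩

/-- Tube lemma for parametrized maps vanishing on the zero section. -/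
theorem tube {X : Type v} [TopologicalSpace X] {C : Set X} (hC : IsCompact C)
    {Φ : X × G → G} (hΦ : Continuous Φ) (h0 : ∀ x, Φ (x, 0) = 0) {S : Set G}
    (hS : S ∈ nhds (0 : G)) :
    ∃ W ∈ nhds (0 : G), ∀ x ∈ C, ∀ v ∈ W, Φ (x, v) ∈ S := by
  have hu : IsOpen (Φ ⁻¹' interior S) := isOpen_interior.preimage hΦ
  have hsub : C ×ˢ ({0} : Set G) ⊆ Φ ⁻¹' interior S := by
    rintro ⟨x, v⟩ ⟨hx, hv⟩
    have hv0 : v = 0 := hv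
    subst hv0
    show Φ (x, 0) ∈ interior S
    rw [h0]
    exact mem_interior_iff_mem_nhds.mpr hS
  obtain ⟨v', w, _, hwOpen, hCv, h0w, hvw⟩ :=
    generalized_tube_lemma hC isCompact_singleton hu hsub
  refine ⟨w, hwOpen.mem_nhds (h0w rfl), ?_⟩
  intro x hx v hv
  have : (x, v) ∈ v' ×ˢ w := ⟨hCv hx, hv⟩
  exact interior_subset (hvw this)

end Top

end Gyrogroup
open Gyrogroup
theorem exists_invariant_seq_compact_normal {G : Type u} [Gyrogroup G] [TopologicalSpace G]
    [TopGyrogroup G] [SigmaCompactSpace G] [LocallyCompactSpace G]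
    (hst : StronglyTop G) (U : ℕ → Set G) (hU : ∀ n, U n ∈ nhds (0 : G)) :
    ∃ V : ℕ → Set G,
      (∀ n, IsOpen (V n) ∧ (0 : G) ∈ V n ∧ (fun x : G => -x) '' V n = V n) ∧
      IsCompact (closure (V 0)) ∧
      (∀ n, Set.image2 (· + ·) (V (n + 1)) (V (n + 1)) ⊆ V n ∩ U n) ∧
      (∀ n, ∀ x y : G, gyr x y '' V n = V n) ∧
      IsCompact (⋂ n, V n) ∧ IsNormalSubgyro (⋂ n, V n) ∧
      ∀ x : G, (x + ·) '' (⋂ n, V n) = (· + x) '' (⋂ n, V n) := by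
  classical
  haveI : T2Space G := TopGyrogroup.t2
  obtain ⟨μ, hμ⟩ := hst
  set CC : ℕ → Set G := compactCovering G with hCC
  -- the parametrized maps
  set F1 : G × G → G := fun p => -p.1 + (p.2 + p.1) with hF1
  set F2 : G × G → G := fun p => rdiv (p.1 + p.2) p.1 with hF2
  set F3 : (G × G) × G → G := fun p => -(p.1.1 + p.1.2) + ((p.1.1 + p.2) + p.1.2) with hF3
  set F5 : G × G → G := fun p => p.1 + -(p.1 + p.2) with hF5
  have hF1c : Continuous F1 := cont_add (cont_neg continuous_fst)
    (cont_add continuous_snd continuous_fst)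
  have hF2c : Continuous F2 := by
    have : F2 = fun p : G × G =>
        -(p.1 + (-(p.1 + (p.1 + p.2)) + p.1)) := rfl
    rw [this]
    exact cont_neg (cont_add continuous_fst (cont_add
      (cont_neg (cont_add continuous_fst (cont_add continuous_fst continuous_snd)))
      continuous_fst))
  have hF3c : Continuous F3 := by
    have c1 : Continuous fun p : (G × G) × G => p.1.1 := continuous_fst.comp continuous_fst
    have c2 : Continuous fun p : (G × G) × G => p.1.2 := continuous_snd.comp continuous_fst
    exact cont_add (cont_neg (cont_add c1 c2)) (cont_add (cont_add c1 continuous_snd) c2)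
  have hF5c : Continuous F5 := cont_add continuous_fst
    (cont_neg (cont_add continuous_fst continuous_snd))
  have hF10 : ∀ x : G, F1 (x, 0) = 0 := by
    intro x; show -x + ((0 : G) + x) = 0; rw [zero_add', Gyrogroup.neg_add']
  have hF20 : ∀ x : G, F2 (x, 0) = 0 := by
    intro x; show rdiv (x + (0 : G)) x = 0; rw [add_zero', rdiv_self]
  have hF30 : ∀ p : G × G, F3 (p, 0) = 0 := by
    intro p; show -(p.1 + p.2) + ((p.1 + (0 : G)) + p.2) = 0
    rw [add_zero', Gyrogroup.neg_add']
  have hF50 : ∀ x : G, F5 (x, 0) = 0 := by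
    intro x; show x + -(x + (0 : G)) = 0; rw [add_zero', Gyrogroup.add_neg']
  -- property of each term of the sequence
  set P : Set G → Prop := fun V => IsOpen V ∧ (0 : G) ∈ V ∧
    ((fun x : G => -x) '' V = V) ∧ ∀ x y : G, gyr x y '' V = V with hP
  set Link : ℕ → Set G → Set G → Prop := fun n Vp V =>
    Set.image2 (· + ·) V V ⊆ Vp ∩ U n ∧
    (∀ x ∈ CC n, ∀ v ∈ V, F1 (x, v) ∈ Vp) ∧
    (∀ x ∈ CC n, ∀ v ∈ V, F2 (x, v) ∈ Vp) ∧
    (∀ x ∈ CC n, ∀ y ∈ CC n, ∀ v ∈ V, F3 ((x, y), v) ∈ Vp) ∧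
    (∀ x ∈ CC n, ∀ v ∈ V, F5 (x, v) ∈ Vp) with hLinkdef
  -- the recursive step
  have hstep : ∀ (n : ℕ) (Vp : Set G), P Vp → ∃ V, P V ∧ Link n Vp V := by
    intro n Vp hPVp
    have hVpn : Vp ∈ nhds (0 : G) := hPVp.1.mem_nhds hPVp.2.1
    have hVpU : Vp ∩ U n ∈ nhds (0 : G) := Filter.inter_mem hVpn (hU n)
    -- addition condition
    have haddc : ∃ T ∈ nhds (0 : G), ∀ v ∈ T, ∀ w ∈ T, v + w ∈ Vp ∩ U n := by
      have hca : ContinuousAt (fun p : G × G => p.1 + p.2) (0, 0) :=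
        TopGyrogroup.continuous_add.continuousAt
      have h00 : (fun p : G × G => p.1 + p.2) (0, 0) = 0 := zero_add' 0
      have hpre : (fun p : G × G => p.1 + p.2) ⁻¹' (Vp ∩ U n) ∈ nhds ((0 : G), (0 : G)) := by
        apply hca
        rw [h00]; exact hVpU
      rw [mem_nhds_prod_iff] at hpre
      obtain ⟨T1, hT1, T2, hT2, hsub⟩ := hpre
      refine ⟨T1 ∩ T2, Filter.inter_mem hT1 hT2, ?_⟩
      intro v hv w hw
      exact hsub (Set.mk_mem_prod hv.1 hw.2)
    obtain ⟨T, hT, hTadd⟩ := haddc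
    obtain ⟨W1, hW1, hW1s⟩ := tube (isCompact_compactCovering G n) hF1c hF10 hVpn
    obtain ⟨W2, hW2, hW2s⟩ := tube (isCompact_compactCovering G n) hF2c hF20 hVpn
    obtain ⟨W3, hW3, hW3s⟩ := tube ((isCompact_compactCovering G n).prod
      (isCompact_compactCovering G n)) hF3c hF30 hVpn
    obtain ⟨W5, hW5, hW5s⟩ := tube (isCompact_compactCovering G n) hF5c hF50 hVpn
    have hWtot : T ∩ W1 ∩ W2 ∩ W3 ∩ W5 ∈ nhds (0 : G) :=
      Filter.inter_mem (Filter.inter_mem (Filter.inter_mem (Filter.inter_mem hT hW1) hW2)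
        hW3) hW5
    obtain ⟨V, hVo, hV0, hVsym, hVgyr, hVsub⟩ := exists_good_sub hμ hWtot
    refine ⟨V, ⟨hVo, hV0, hVsym, hVgyr⟩, ?_, ?_, ?_, ?_, ?_⟩
    · rintro z ⟨v, hv, w, hw, rfl⟩
      exact hTadd v (hVsub hv).1.1.1.1 w (hVsub hw).1.1.1.1
    · intro x hx v hv
      exact hW1s x hx v (hVsub hv).1.1.1.2
    · intro x hx v hv
      exact hW2s x hx v (hVsub hv).1.1.2
    · intro x hx y hy v hv
      exact hW3s (x, y) (Set.mk_mem_prod hx hy) v (hVsub hv).1.2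
    · intro x hx v hv
      exact hW5s x hx v (hVsub hv).2
  -- the base
  obtain ⟨K, hKc, hKn⟩ := exists_compact_mem_nhds (0 : G)
  obtain ⟨V0, hV0o, hV00, hV0sym, hV0gyr, hV0sub⟩ := exists_good_sub hμ hKn
  have hP0 : P V0 := ⟨hV0o, hV00, hV0sym, hV0gyr⟩
  have hclos0 : IsCompact (closure V0) :=
    hKc.of_isClosed_subset isClosed_closure (closure_minimal hV0sub hKc.isClosed)
  -- build the sequence
  choose stepV stepP stepL using hstep
  set g : ℕ → {V : Set G // P V} := fun n =>
    Nat.rec ⟨V0, hP0⟩ (fun n ih => ⟨stepV n ih.1 ih.2, stepP n ih.1 ih.2⟩) n with hg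
  set V : ℕ → Set G := fun n => (g n).1 with hVdef
  have hPn : ∀ n, P (V n) := fun n => (g n).2
  have hLinkn : ∀ n, Link n (V n) (V (n + 1)) := fun n => stepL n (g n).1 (g n).2
  have hV0eq : V 0 = V0 := rfl
  -- basic facts
  have hVmono1 : ∀ n, V (n + 1) ⊆ V n := by
    intro n v hv
    have h1 : v + 0 ∈ Set.image2 (· + ·) (V (n + 1)) (V (n + 1)) :=
      Set.mem_image2_of_mem hv (hPn (n + 1)).2.1
    have h2 := (hLinkn n).1 h1
    rw [add_zero'] at h2
    exact h2.1
  have hVanti : Antitone V := antitone_nat_of_succ_le hVmono1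
  set N : Set G := ⋂ n, V n with hN
  have hmemN : ∀ {a : G}, a ∈ N → ∀ n, a ∈ V n := fun ha n => Set.mem_iInter.mp ha n
  have hmemN' : ∀ {a : G}, (∀ n, a ∈ V n) → a ∈ N := fun ha => Set.mem_iInter.mpr ha
  have h0N : (0 : G) ∈ N := hmemN' fun n => (hPn n).2.1
  have hnegVn : ∀ n, ∀ {a : G}, a ∈ V n → -a ∈ V n := by
    intro n a ha
    have := Set.mem_image_of_mem (fun x : G => -x) ha
    rwa [(hPn n).2.2.1] at this
  have hgyrVn : ∀ n (p q : G), ∀ {a : G}, a ∈ V n → gyr p q a ∈ V n := by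
    intro n p q a ha
    have := Set.mem_image_of_mem (gyr p q) ha
    rwa [(hPn n).2.2.2 p q] at this
  have haddN : ∀ a ∈ N, ∀ b ∈ N, a + b ∈ N := by
    intro a ha b hb
    refine hmemN' fun n => ?_
    exact ((hLinkn n).1 (Set.mem_image2_of_mem (hmemN ha (n + 1)) (hmemN hb (n + 1)))).1
  have hnegN : ∀ a ∈ N, -a ∈ N := fun a ha => hmemN' fun n => hnegVn n (hmemN ha n)
  have hgyrN : ∀ x y : G, gyr x y '' N = N := by
    intro x y
    rw [hN, Set.image_iInter (Gyrogroup.gyr_bij x y) V]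
    exact Set.iInter_congr fun n => (hPn n).2.2.2 x y
  have hcov : ∀ x : G, ∃ n, x ∈ CC n := fun x => exists_mem_compactCovering x
  have hCCmono : ∀ {m n : ℕ}, m ≤ n → CC m ⊆ CC n := fun h => compactCovering_subset G h
  -- σ-compact trick : conjugation-type maps preserve N
  have hfix : ∀ (Φ : G × G → G), (∀ n, ∀ x ∈ CC n, ∀ v ∈ V (n + 1), Φ (x, v) ∈ V n) →
      ∀ (x : G), ∀ a ∈ N, Φ (x, a) ∈ N := by
    intro Φ hΦ x a ha
    obtain ⟨m, hm⟩ := hcov x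
    refine hmemN' fun k => ?_
    have h1 : Φ (x, a) ∈ V (max m k) :=
      hΦ (max m k) x (hCCmono (le_max_left m k) hm) a (hmemN ha (max m k + 1))
    exact hVanti (le_max_right m k) h1
  have hc3N : ∀ (x : G), ∀ b ∈ N, -x + (b + x) ∈ N := by
    intro x b hb
    exact hfix F1 (fun n x hx v hv => (hLinkn n).2.1 x hx v hv) x b hb
  have hc4N : ∀ (x : G), ∀ a ∈ N, rdiv (x + a) x ∈ N := by
    intro x a ha
    exact hfix F2 (fun n x hx v hv => (hLinkn n).2.2.1 x hx v hv) x a ha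
  have hnegcN : ∀ (x m' : G), m' ∈ N → x + -(x + m') ∈ N := by
    intro x m' hm'
    exact hfix F5 (fun n x hx v hv => (hLinkn n).2.2.2.2 x hx v hv) x m' hm'
  have hBN : ∀ (x y m' : G), m' ∈ N → -(x + y) + ((x + m') + y) ∈ N := by
    intro x y m' hm'
    obtain ⟨mx, hmx⟩ := hcov x
    obtain ⟨my, hmy⟩ := hcov y
    refine hmemN' fun k => ?_
    set n := max (max mx my) k with hn
    have h1 : F3 ((x, y), m') ∈ V n :=
      (hLinkn n).2.2.2.1 x (hCCmono ((le_max_left mx my).trans (le_max_left _ k)) hmx)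
        y (hCCmono ((le_max_right mx my).trans (le_max_left _ k)) hmy)
        m' (hmemN hm' (n + 1))
    exact hVanti (le_max_right (max mx my) k) h1
  -- N is closed and compact
  have hclosub : ∀ n, closure (V (n + 1)) ⊆ V n := by
    intro n z hz
    have hopen : IsOpen ((fun w => z + w) '' V (n + 1)) :=
      ((addLeftHomeo z).isOpen_image).mpr (hPn (n + 1)).1
    have hzmem : z ∈ (fun w => z + w) '' V (n + 1) :=
      ⟨0, (hPn (n + 1)).2.1, add_zero' z⟩
    obtain ⟨p, hp1, hp2⟩ := mem_closure_iff.mp hz _ hopen hzmem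
    obtain ⟨v, hv, hvz⟩ := hp1
    have hz' : z = (z + v) + gyr z v (-v) := (add_gyr_neg z v).symm
    have hmem2 : gyr z v (-v) ∈ V (n + 1) := hgyrVn (n + 1) z v (hnegVn (n + 1) hv)
    have : z ∈ Set.image2 (· + ·) (V (n + 1)) (V (n + 1)) := by
      rw [hz']
      have hvz' : z + v = p := hvz
      exact Set.mem_image2_of_mem (by rw [hvz']; exact hp2) hmem2
    exact ((hLinkn n).1 this).1
  have hNeq : N = ⋂ n, closure (V (n + 1)) := by
    apply Set.Subset.antisymm
    · exact Set.subset_iInter fun n => (Set.iInter_subset V (n + 1)).trans subset_closure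
    · intro z hz
      exact hmemN' fun n => hclosub n (Set.mem_iInter.mp hz n)
  have hNclosed : IsClosed N := by
    rw [hNeq]; exact isClosed_iInter fun n => isClosed_closure
  have hNsub : N ⊆ closure (V 0) := (Set.iInter_subset V 0).trans subset_closure
  have hclos0' : IsCompact (closure (V 0)) := by rw [hV0eq]; exact hclos0
  have hNcomp : IsCompact N := hclos0'.of_isClosed_subset hNclosed hNsub
  -- commutation of cosets
  have hcomm : ∀ x : G, (x + ·) '' N = (· + x) '' N := by
    intro x
    apply Set.Subset.antisymm
    · rintro z ⟨a, ha, rfl⟩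
      refine ⟨rdiv (x + a) x, hc4N x a ha, ?_⟩
      exact rdiv_add (x + a) x
    · rintro z ⟨b, hb, rfl⟩
      refine ⟨-x + (b + x), hc3N x b hb, ?_⟩
      exact add_neg_cancel_left x (b + x)
  exact ⟨V, fun n => ⟨(hPn n).1, (hPn n).2.1, (hPn n).2.2.1⟩, hclos0',
    fun n => (hLinkn n).1, fun n => (hPn n).2.2.2, hNcomp,
    isNormalSubgyro_mk h0N haddN hnegN hgyrN hBN hnegcN, hcomm⟩
end

section
/- Let G be a topological gyrogroup, X an infinite discrete space, and S(X) = X ∪ {a} its one-point compactification. If f : S(X) → G is continuous with f(a) = 0 and the subgyrogroup generated by f(S(X)) is dense in G, then S = f(S(X)) \ {0} is a suitable set for G. -/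
/-!
Continuity of `f` at `∞` says exactly that `f x → 0` along the cofinite filter on `X`. Hence a
point `s ≠ 0` of the image has a neighbourhood, disjoint from one of `0`, that contains `f x`
for only finitely many `x`; in a Hausdorff space this isolates `s`. The image is compact, hence
closed, and removing `0` does not change the generated subgyrogroup.
-/

universe u

open Set Filter Topology

namespace Gyrogroup

variable {G : Type u} [Gyrogroup G]

theorem isSubgyro_gen (A : Set G) : IsSubgyro (gen A) :=
  ⟨fun _ hS => hS.1.1,
    fun _ _ ha hb S hS => hS.1.2.1 (ha S hS) (hb S hS),
    fun _ ha S hS => hS.1.2.2.1 (ha S hS),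
    fun _ _ _ ha hb hc S hS => hS.1.2.2.2 (ha S hS) (hb S hS) (hc S hS)⟩

theorem subset_gen (A : Set G) : A ⊆ gen A := fun _ ha _ hS => hS.2 ha

theorem gen_subset {A T : Set G} (hT : IsSubgyro T) (h : A ⊆ T) : gen A ⊆ T :=
  sInter_subset_of_mem ⟨hT, h⟩

theorem gen_sdiff_zero (A : Set G) : gen (A \ {0}) = gen A := by
  refine (gen_subset (isSubgyro_gen A) (sdiff_subset.trans (subset_gen A))).antisymm
    (gen_subset (isSubgyro_gen _) fun a ha => ?_)
  obtain rfl | h := eq_or_ne a 0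
  · exact (isSubgyro_gen _).1
  · exact subset_gen _ ⟨ha, h⟩

end Gyrogroup

section

open OnePoint

theorem OnePoint.range_sdiff_infty {X Y : Type*} (f : OnePoint X → Y) :
    range f \ {f ∞} = range (fun x : X => f x) \ {f ∞} := by
  rw [← image_univ, ← insert_infty_range_coe, image_insert_eq,
    insert_sdiff_of_mem _ (mem_singleton _), ← range_comp]
  rfl

variable {ι Y : Type*} [TopologicalSpace Y]

theorem discreteTopology_of_forall_finite_inter_nhds [T1Space Y] {S : Set Y}
    (h : ∀ s ∈ S, ∃ V ∈ 𝓝 s, (V ∩ S).Finite) : DiscreteTopology S := by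
  refine discreteTopology_iff_isOpen_singleton.2 fun ⟨s, hs⟩ => ?_
  obtain ⟨V, hV, hfin⟩ := h s hs
  exact isOpen_singleton_of_finite_mem_nhds _
    (continuous_subtype_val.continuousAt.preimage_mem_nhds hV)
    ((hfin.preimage Subtype.val_injective.injOn).subset fun y hy => ⟨hy, y.2⟩)

theorem Filter.Tendsto.exists_finite_preimage_nhds_of_ne [T2Space Y] {g : ι → Y} {z s : Y}
    (hg : Tendsto g cofinite (𝓝 z)) (hs : s ≠ z) : ∃ V ∈ 𝓝 s, (g ⁻¹' V).Finite := by
  obtain ⟨V, hV, W, hW, hVW⟩ := Filter.disjoint_iff.1 (disjoint_nhds_nhds.2 hs)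
  exact ⟨V, hV, (mem_cofinite.1 (hg hW)).subset fun _ hi hiW => disjoint_left.1 hVW hi hiW⟩

theorem Filter.Tendsto.discreteTopology_range_sdiff [T2Space Y] {g : ι → Y} {z : Y}
    (hg : Tendsto g cofinite (𝓝 z)) : DiscreteTopology (range g \ {z} : Set Y) :=
  discreteTopology_of_forall_finite_inter_nhds fun _ hs => by
    obtain ⟨V, hV, hfin⟩ := hg.exists_finite_preimage_nhds_of_ne hs.2
    refine ⟨V, hV, (hfin.image g).subset ?_⟩
    rintro _ ⟨hy, ⟨i, rfl⟩, -⟩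
    exact mem_image_of_mem g hy

theorem OnePoint.discreteTopology_range_sdiff_infty {X : Type*} [TopologicalSpace X]
    [DiscreteTopology X] [T2Space Y] {f : OnePoint X → Y} (hf : Continuous f) :
    DiscreteTopology (range f \ {f ∞} : Set Y) := by
  rw [range_sdiff_infty]
  exact ((continuous_iff_from_discrete f).1 hf).discreteTopology_range_sdiff

end

open Gyrogroup
theorem suitable_of_onePoint_map_general {G : Type u} [Gyrogroup G] [TopologicalSpace G]
    [TopGyrogroup G] (X : Type u) [TopologicalSpace X] [DiscreteTopology X]
    (f : OnePoint X → G) (hf : Continuous f) (hfa : f OnePoint.infty = 0)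
    (hdense : Dense (gen (Set.range f))) :
    IsSuitable (Set.range f \ {(0 : G)}) := by
  have := TopGyrogroup.t2 (G := G)
  refine ⟨hfa ▸ OnePoint.discreteTopology_range_sdiff_infty hf, ?_, ?_⟩
  · rw [sdiff_union_of_subset (singleton_subset_iff.2 (hfa ▸ mem_range_self _))]
    exact (isCompact_range hf).isClosed
  · rwa [gen_sdiff_zero]

theorem suitable_of_onePoint_map {G : Type u} [Gyrogroup G] [TopologicalSpace G]
    [TopGyrogroup G] (X : Type u) [TopologicalSpace X] [DiscreteTopology X] [Infinite X]
    (f : OnePoint X → G) (hf : Continuous f) (hfa : f OnePoint.infty = 0)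
    (hdense : Dense (gen (Set.range f))) :
    IsSuitable (Set.range f \ {(0 : G)}) :=
  suitable_of_onePoint_map_general X f hf hfa hdense
end

section
/- Let X be a compact topological space with a single non-isolated point x, Y an infinite topological space, and f : X → Y a continuous surjection. Then Y is a compact space with a single non-isolated point, namely f(x). -/
universe u

lemma finite_of_compact_isolated {X : Type u} [TopologicalSpace X] {s : Set X}
    (hs : IsCompact s) (h : ∀ y ∈ s, IsOpen ({y} : Set X)) : s.Finite := by
  obtain ⟨t, ht⟩ := hs.elim_finite_subcover (fun y : s => ({(y : X)} : Set X))
    (fun y => h y y.2) (fun y hy => Set.mem_iUnion.2 ⟨⟨y, hy⟩, rfl⟩)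
  refine Set.Finite.subset (Set.Finite.biUnion t.finite_toSet
    (fun i _ => Set.finite_singleton (i : X))) ?_
  simpa using ht

open Gyrogroup
theorem image_single_nonisolated {X Y : Type u} [TopologicalSpace X] [TopologicalSpace Y]
    [T2Space X] [T2Space Y] [CompactSpace X] [Infinite Y]
    (x : X) (hx : ¬ IsOpen ({x} : Set X)) (hiso : ∀ y : X, y ≠ x → IsOpen ({y} : Set X))
    (f : X → Y) (hf : Continuous f) (hsurj : Function.Surjective f) :
    CompactSpace Y ∧ ¬ IsOpen ({f x} : Set Y) ∧
      ∀ z : Y, z ≠ f x → IsOpen ({z} : Set Y) := by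
  have hqm : Topology.IsQuotientMap f := hf.isClosedMap.isQuotientMap hf hsurj
  refine ⟨⟨hsurj.range_eq ▸ isCompact_range hf⟩, ?_, ?_⟩
  · intro hopen
    set C : Set X := f ⁻¹' ({f x}ᶜ) with hCdef
    have hCc : IsCompact C := ((hopen.isClosed_compl).preimage hf).isCompact
    have hfin : C.Finite := finite_of_compact_isolated hCc (by
      intro y hy
      exact hiso y (fun h => hy (by simp [hCdef, h])))
    have himg : ({f x}ᶜ : Set Y) ⊆ f '' C := by
      intro z hz
      obtain ⟨w, rfl⟩ := hsurj z
      exact ⟨w, hz, rfl⟩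
    have : (Set.univ : Set Y).Finite := by
      refine Set.Finite.subset ((Set.finite_singleton (f x)).union (hfin.image f)) ?_
      intro z _
      by_cases h : z = f x
      · exact Or.inl h
      · exact Or.inr (himg h)
    exact Set.infinite_univ this
  · intro z hz
    rw [← hqm.isOpen_preimage]
    have : f ⁻¹' ({z} : Set Y) = ⋃ y ∈ f ⁻¹' ({z} : Set Y), ({y} : Set X) := by
      ext w; simp
    rw [this]
    refine isOpen_biUnion fun y hy => hiso y fun h => hz ?_
    have : f y = z := hy
    rw [← this, h]
end
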